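/- Let r, h > 0 and define γ : ℝ → ℝ³ by γ(s) = e^{φ(s)}·(r·cos φ(s), r·sin φ(s), h), where φ(s) = h·s/√(2r² + h²). Let T(s) = γ'(s), let κ = 2r√(r² + h²)/(2r² + h²), and let N(s) = A(s)/κ where A(s) = γ''(s) − (2·γ₃'(s)/γ₃(s))·γ'(s) + (‖γ'(s)‖ₑ²/γ₃(s))·e₃. Then the vector field ∇_T N(s) + κ·T(s), where ∇_T N(s) = N'(s) − (T₃(s)/γ₃(s))·N(s) − (N₃(s)/γ₃(s))·T(s) + (⟨T(s), N(s)⟩ₑ/γ₃(s))·e₃, has constant hyperbolic norm ‖∇_T N(s) + κ·T(s)‖ₑ/γ₃(s) = h²/(2r² + h²) for all s; that is, the torsion of γ is constant and equals h²/(2r² + h²). -/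

import Mathlib

/-!
The curve is the orbit of `(r, 0, h)` under the one-parameter group of loxodromic isometries
`θ ↦ e^θ R_θ`, `R_θ` the rotation about the `e₃`-axis, traversed at the constant rate
`φ' = h / √(2r² + h²)`. Every vector field that enters the torsion (`T`, `γ''`, `N`, `N'`) has
the form `s ↦ e^θ R_θ v` with `θ = φ(s)` and `v` constant, and differentiating such a field
replaces `v = (x, y, z)` by `φ' (x - y, x + y, z)`. So the Frenet quantities reduce to linear
algebra on the constant vectors `v`, and the factor `e^θ` cancels against `γ₃` in the hyperbolic
norm.
-/

open Real
open scoped RealInnerProductSpace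

/-- A point/vector of Euclidean 3-space. -/
noncomputable def v3 (x y z : ℝ) : EuclideanSpace ℝ (Fin 3) := !₂[x, y, z]

/-- Hyperbolic (upper half-space) inner product of u and v at the point p. -/
noncomputable def hInner (p u v : EuclideanSpace ℝ (Fin 3)) : ℝ := ⟪u, v⟫ / (p 2) ^ 2

/-- Hyperbolic (upper half-space) norm of v at the point p. -/
noncomputable def hNorm (p v : EuclideanSpace ℝ (Fin 3)) : ℝ := ‖v‖ / p 2

/-- Covariant acceleration ∇_{γ'}γ' of a hyperbolic unit-speed curve in the
upper half-space model: A(s) = γ''(s) − (2γ₃'(s)/γ₃(s))·γ'(s) + (‖γ'(s)‖ₑ²/γ₃(s))·e₃. -/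
noncomputable def hAccel (γ : ℝ → EuclideanSpace ℝ (Fin 3)) (s : ℝ) :
    EuclideanSpace ℝ (Fin 3) :=
  deriv (deriv γ) s - (2 * deriv (fun t => γ t 2) s / γ s 2) • deriv γ s
    + (‖deriv γ s‖ ^ 2 / γ s 2) • v3 0 0 1

lemma v3_add (x y z x' y' z' : ℝ) : v3 x y z + v3 x' y' z' = v3 (x + x') (y + y') (z + z') := by
  ext i; fin_cases i <;> simp [v3]

lemma v3_sub (x y z x' y' z' : ℝ) : v3 x y z - v3 x' y' z' = v3 (x - x') (y - y') (z - z') := by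
  ext i; fin_cases i <;> simp [v3]

lemma smul_v3 (c x y z : ℝ) : c • v3 x y z = v3 (c * x) (c * y) (c * z) := by
  ext i; fin_cases i <;> simp [v3]

lemma inner_v3 (x y z x' y' z' : ℝ) : ⟪v3 x y z, v3 x' y' z'⟫ = x * x' + y * y' + z * z' := by
  simp only [v3, PiLp.inner_apply, RCLike.inner_apply, ringHom_apply, Fin.sum_univ_three,
    Fin.isValue, Matrix.cons_val_zero, Matrix.cons_val_one, Matrix.cons_val]
  ring

lemma hasDerivAt_v3 {f g k : ℝ → ℝ} {f' g' k' t : ℝ}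
    (hf : HasDerivAt f f' t) (hg : HasDerivAt g g' t) (hk : HasDerivAt k k' t) :
    HasDerivAt (fun s => v3 (f s) (g s) (k s)) (v3 f' g' k') t := by
  have basis : ∀ x y z : ℝ, v3 x y z = x • v3 1 0 0 + y • v3 0 1 0 + z • v3 0 0 1 := by
    intro x y z; ext i; fin_cases i <;> simp [v3]
  rw [show (fun s => v3 (f s) (g s) (k s)) = _ from funext fun s => basis (f s) (g s) (k s),
    basis f' g' k']
  exact ((hf.smul_const _).add (hg.smul_const _)).add (hk.smul_const _)

noncomputable def spiral (θ x y z : ℝ) : EuclideanSpace ℝ (Fin 3) :=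
  exp θ • v3 (x * cos θ - y * sin θ) (x * sin θ + y * cos θ) z

section Spiral

variable (θ x y z x' y' z' : ℝ)

lemma spiral_apply_two : spiral θ x y z 2 = exp θ * z := rfl

lemma smul_spiral (c : ℝ) : c • spiral θ x y z = spiral θ (c * x) (c * y) (c * z) := by
  rw [spiral, spiral, smul_comm, smul_v3]
  congr 2 <;> ring

lemma spiral_add : spiral θ x y z + spiral θ x' y' z' = spiral θ (x + x') (y + y') (z + z') := by
  simp only [spiral, ← smul_add, v3_add]
  congr 2 <;> ring

lemma spiral_sub : spiral θ x y z - spiral θ x' y' z' = spiral θ (x - x') (y - y') (z - z') := by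
  simp only [spiral, ← smul_sub, v3_sub]
  congr 2 <;> ring

lemma smul_e3_eq_spiral (c : ℝ) : c • v3 0 0 1 = spiral θ 0 0 (c / exp θ) := by
  rw [spiral, smul_v3, smul_v3]
  congr 1 <;> field_simp <;> ring

lemma inner_spiral :
    ⟪spiral θ x y z, spiral θ x' y' z'⟫ = exp θ ^ 2 * (x * x' + y * y' + z * z') := by
  simp only [spiral, inner_smul_left, inner_smul_right, inner_v3, conj_trivial]
  linear_combination exp θ ^ 2 * (x * x' + y * y') * sin_sq_add_cos_sq θ

lemma norm_spiral : ‖spiral θ x y z‖ = exp θ * √(x ^ 2 + y ^ 2 + z ^ 2) := by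
  rw [← sqrt_sq (norm_nonneg _), ← real_inner_self_eq_norm_sq, inner_spiral,
    sqrt_mul (by positivity), sqrt_sq (exp_pos θ).le]
  ring_nf

lemma hasDerivAt_spiral : HasDerivAt (fun θ => spiral θ x y z) (spiral θ (x - y) (x + y) z) θ := by
  have hrot := hasDerivAt_v3 (((hasDerivAt_cos θ).const_mul x).sub ((hasDerivAt_sin θ).const_mul y))
    (((hasDerivAt_sin θ).const_mul x).add ((hasDerivAt_cos θ).const_mul y)) (hasDerivAt_const θ z)
  refine ((hasDerivAt_exp θ).smul hrot).congr_deriv ?_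
  simp only [spiral, Pi.sub_apply, Pi.add_apply, ← smul_add, v3_add]
  congr 2 <;> ring

lemma hasDerivAt_spiral_mul (a s : ℝ) :
    HasDerivAt (fun s => spiral (a * s) x y z)
      (spiral (a * s) (a * (x - y)) (a * (x + y)) (a * z)) s := by
  rw [← smul_spiral]
  exact (hasDerivAt_spiral (a * s) x y z).scomp s ((hasDerivAt_id s).const_mul a)
    |>.congr_deriv (by simp)

lemma deriv_spiral_mul (a : ℝ) :
    deriv (fun s => spiral (a * s) x y z) =
      fun s => spiral (a * s) (a * (x - y)) (a * (x + y)) (a * z) :=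
  funext fun s => (hasDerivAt_spiral_mul x y z a s).deriv

end Spiral

lemma deriv_euclidean_apply {n : ℕ} {γ : ℝ → EuclideanSpace ℝ (Fin n)} {s : ℝ}
    (hγ : DifferentiableAt ℝ γ s) (i : Fin n) :
    deriv (fun t => γ t i) s = deriv γ s i :=
  ((EuclideanSpace.proj i : EuclideanSpace ℝ (Fin n) →L[ℝ] ℝ).hasFDerivAt.comp_hasDerivAt s
    hγ.hasDerivAt).deriv

noncomputable def hCovDeriv (γ X Y : ℝ → EuclideanSpace ℝ (Fin 3)) (s : ℝ) :
    EuclideanSpace ℝ (Fin 3) :=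
  deriv Y s - (X s 2 / γ s 2) • Y s - (Y s 2 / γ s 2) • X s + (⟪X s, Y s⟫ / γ s 2) • v3 0 0 1

lemma hAccel_spiral (a x z s : ℝ) (hz : z ≠ 0) :
    hAccel (fun s => spiral (a * s) x 0 z) s = (2 * a ^ 2 * x / z) • spiral (a * s) (-z) 0 x := by
  have hT := hasDerivAt_spiral_mul x 0 z a s
  rw [hAccel, deriv_euclidean_apply hT.differentiableAt, deriv_spiral_mul, deriv_spiral_mul,
    spiral_apply_two, spiral_apply_two, norm_spiral, smul_e3_eq_spiral (a * s), smul_spiral,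
    smul_spiral, spiral_sub, spiral_add, mul_pow, sq_sqrt (by positivity)]
  have hexp := exp_pos (a * s)
  congr 1 <;> field_simp <;> ring

lemma hCovDeriv_spiral (a x z μ s : ℝ) (hz : z ≠ 0) :
    hCovDeriv (fun s => spiral (a * s) x 0 z) (deriv fun s => spiral (a * s) x 0 z)
      (fun s => μ • spiral (a * s) (-z) 0 x) s =
      (-(μ * a / z)) • spiral (a * s) (x ^ 2) (z ^ 2 + x ^ 2) (x * z) := by
  simp only [smul_spiral]
  rw [hCovDeriv, deriv_spiral_mul, deriv_spiral_mul, inner_spiral, spiral_apply_two,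
    spiral_apply_two, spiral_apply_two, smul_e3_eq_spiral (a * s), smul_spiral, smul_spiral,
    spiral_sub, spiral_sub, spiral_add]
  have hexp := exp_pos (a * s)
  congr 1 <;> field_simp <;> ring

/-- For γ(s) = e^{φ(s)}·(r cos φ(s), r sin φ(s), h) with
φ(s) = hs/√(2r² + h²), T = γ', κ = 2r√(r² + h²)/(2r² + h²) and N = A/κ, the vector field
∇_T N + κ·T has constant hyperbolic norm h²/(2r² + h²); that is, the torsion of γ is the
constant h²/(2r² + h²). -/
theorem stmt_19 (r h : ℝ) (hr : 0 < r) (hh : 0 < h)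
    (φ : ℝ → ℝ) (hφ : φ = fun s => h * s / Real.sqrt (2 * r ^ 2 + h ^ 2))
    (γ : ℝ → EuclideanSpace ℝ (Fin 3))
    (hγ : γ = fun s => Real.exp (φ s) •
        v3 (r * Real.cos (φ s)) (r * Real.sin (φ s)) h)
    (T N : ℝ → EuclideanSpace ℝ (Fin 3)) (κ : ℝ)
    (hT : T = deriv γ)
    (hκ : κ = 2 * r * Real.sqrt (r ^ 2 + h ^ 2) / (2 * r ^ 2 + h ^ 2))
    (hN : ∀ s, N s = κ⁻¹ • hAccel γ s) :
    ∀ s, ‖(deriv N s - (T s 2 / γ s 2) • N s - (N s 2 / γ s 2) • T s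
        + (⟪T s, N s⟫ / γ s 2) • v3 0 0 1) + κ • T s‖ / γ s 2
      = h ^ 2 / (2 * r ^ 2 + h ^ 2) := by
  intro s
  set c := √(2 * r ^ 2 + h ^ 2)
  set q := √(r ^ 2 + h ^ 2)
  have hc : c ^ 2 = 2 * r ^ 2 + h ^ 2 := sq_sqrt (by positivity)
  have hq : q ^ 2 = r ^ 2 + h ^ 2 := sq_sqrt (by positivity)
  have hcpos : 0 < c := sqrt_pos.2 (by positivity)
  have hqpos : 0 < q := sqrt_pos.2 (by positivity)
  have hγ' : γ = fun s => spiral (h / c * s) r 0 h := by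
    funext s
    simp [hγ, hφ, spiral, mul_div_right_comm h s c]
  have hN' : N = fun s => (h / q) • spiral (h / c * s) (-h) 0 r := by
    funext s
    rw [hN, hγ', hAccel_spiral _ _ _ _ hh.ne', smul_smul, hκ, ← hc]
    congr 1
    field_simp
  change ‖hCovDeriv γ T N s + κ • T s‖ / γ s 2 = _
  have htorsion : hCovDeriv γ T N s + κ • T s =
      (h ^ 3 / (q * c ^ 3)) • spiral (h / c * s) (r ^ 2) (-q ^ 2) (r * h) := by
    rw [hT, hN', hγ', hCovDeriv_spiral _ _ _ _ _ hh.ne', deriv_spiral_mul, smul_spiral, smul_spiral,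
      smul_spiral, spiral_add, hκ, ← hc]
    congr 1 <;> field_simp
    · linear_combination r * (2 * hq - hc)
    · linear_combination (2 * r ^ 2 + h ^ 2) * hq - (h ^ 2 + r ^ 2) * hc
    · linear_combination 2 * hq - hc
  have hlen : (r ^ 2) ^ 2 + (-q ^ 2) ^ 2 + (r * h) ^ 2 = (q * c) ^ 2 := by
    linear_combination (q ^ 2 - r ^ 2) * hq - q ^ 2 * hc
  rw [htorsion, hγ', norm_smul, norm_spiral, spiral_apply_two, hlen, sqrt_sq (by positivity),
    Real.norm_of_nonneg (by positivity), ← hc]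
  field_simp
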